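/- Let (Σ,P) be a Kelvin–Planck theory and let h' and h be distinct hotness levels. The following are equivalent: (i) h' is weakly hotter than h, i.e., \hat{P} contains an element (0,q) with q = μ' − μ + ν, where μ', μ, ν ∈ M₊(Σ), supp μ' ⊆ h', supp μ ⊆ h, and μ'(h') = μ(h) > 0; (ii) T(σ') ≥ T(σ) for every Clausius–Duhem temperature scale T ∈ T_CD and all σ' ∈ h', σ ∈ h. -/

import Mathlib

open Set

noncomputable section

/-- Signed regular Borel measures on `X`, modeled via the Riesz representation
theorem as the weak-star dual of `C(X, ℝ)`. -/
abbrev Meas (X : Type*) [TopologicalSpace X] := WeakDual ℝ C(X, ℝ)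

/-- The ambient space containing `V(X) = M°(X) ⊕ M(X)`; membership in the
subspace `M°(X)` of the first component is expressed by `p.1 1 = 0`. -/
abbrev VSp (X : Type*) [TopologicalSpace X] := Meas X × Meas X

/-- The cone of nonnegative measures. -/
def PosMeas (X : Type*) [TopologicalSpace X] : Set (Meas X) :=
  {μ | ∀ f : C(X, ℝ), (∀ x, 0 ≤ f x) → 0 ≤ μ f}

variable {X : Type*} [TopologicalSpace X]

/-- The Dirac measure at a point, i.e. the evaluation functional. -/
def dirac (x : X) : Meas X :=
  (⟨⟨⟨fun f => f x, fun _ _ => rfl⟩, fun _ _ => rfl⟩,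
    continuous_eval_const x⟩ : C(X, ℝ) →L[ℝ] ℝ)

/-- The set of nonnegative multiples of members of `P`. -/
def coneOf (P : Set (VSp X)) : Set (VSp X) :=
  {x | ∃ c : ℝ, 0 ≤ c ∧ ∃ p ∈ P, x = c • p}

/-- `\hat P`, the weak-star closure of the cone generated by `P`. -/
def hatP (P : Set (VSp X)) : Set (VSp X) :=
  closure (coneOf P)

/-- A thermodynamical theory: processes have change of condition with total mass
zero (i.e. `P ⊆ V(X)`), and `\hat P` is convex. -/
def IsThermoTheory (P : Set (VSp X)) : Prop :=
  (∀ p ∈ P, p.1 (1 : C(X, ℝ)) = 0) ∧ Convex ℝ (hatP P)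

/-- A Kelvin–Planck theory: a thermodynamical theory with
`\hat P ∩ ({0} × M₊(X)) = {(0,0)}`. -/
def IsKelvinPlanck (P : Set (VSp X)) : Prop :=
  IsThermoTheory P ∧ hatP P ∩ (({0} : Set (Meas X)) ×ˢ PosMeas X) = {(0, 0)}

/-- A Clausius–Duhem pair `(η, T)` for the theory `P`: `η` and `T` are continuous,
`T` is strictly positive, and for every continuous `β` equal pointwise to `1/T`
(such a `β` exists, and is unique, by positivity of `T`), the Clausius–Duhem
inequality `∫ η d(Δm) ≥ ∫ (1/T) dq` holds for every process in `P`. -/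
def IsCDPair (P : Set (VSp X)) (η T : C(X, ℝ)) : Prop :=
  (∀ x, 0 < T x) ∧
    ∀ β : C(X, ℝ), (∀ x, β x = (T x)⁻¹) → ∀ p ∈ P, p.2 β ≤ p.1 η

/-- A Clausius–Duhem temperature scale. -/
def IsCDTemp (P : Set (VSp X)) (T : C(X, ℝ)) : Prop :=
  ∃ η : C(X, ℝ), IsCDPair P η T

/-- Two states are of the same hotness: both `(0, δ_a − δ_b)` and `(0, δ_b − δ_a)`
belong to `\hat P`. -/
def SameHotness (P : Set (VSp X)) (a b : X) : Prop :=
  ((0 : Meas X), dirac a - dirac b) ∈ hatP P ∧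
    ((0 : Meas X), dirac b - dirac a) ∈ hatP P

/-- The hotness level of a state. -/
def hotnessLevel (P : Set (VSp X)) (a : X) : Set X :=
  {b | SameHotness P a b}

/-- A subset of the state space that is a hotness level. -/
def IsHotnessLevel (P : Set (VSp X)) (h : Set X) : Prop :=
  ∃ a : X, h = hotnessLevel P a

/-- The (signed) measure `μ` is supported in the set `A`: `μ` annihilates every
continuous function vanishing on `A`. -/
def SuppIn (μ : Meas X) (A : Set X) : Prop :=
  ∀ f : C(X, ℝ), (∀ x ∈ A, f x = 0) → μ f = 0

/-- `\hat Q` contains a passive heat transfer from hotness level `h` to `h'`: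
an element `(0, μ − μ')` of `\hat Q` with `μ, μ'` nonnegative, `supp μ ⊆ h`,
`supp μ' ⊆ h'` and `μ(h) = μ'(h') > 0` (the common value being the total mass). -/
def IsPassiveHT (Q : Set (VSp X)) (h h' : Set X) : Prop :=
  ∃ μ μ' : Meas X, μ ∈ PosMeas X ∧ μ' ∈ PosMeas X ∧ SuppIn μ h ∧ SuppIn μ' h' ∧
    μ (1 : C(X, ℝ)) = μ' (1 : C(X, ℝ)) ∧ 0 < μ (1 : C(X, ℝ)) ∧
    ((0 : Meas X), μ - μ') ∈ hatP Q

/-- Hotness level `h'` is hotter than `h`: the levels are distinct and every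
thermodynamical theory whose closed process cone contains `P` together with a
passive heat transfer from `h` to `h'` fails to be a Kelvin–Planck theory. -/
def Hotter (P : Set (VSp X)) (h' h : Set X) : Prop :=
  h' ≠ h ∧ ∀ Pd : Set (VSp X), IsThermoTheory Pd → P ⊆ hatP Pd →
    IsPassiveHT Pd h h' → ¬ IsKelvinPlanck Pd

/-- State `a` is hotter than state `b`. -/
def HotterState (P : Set (VSp X)) (a b : X) : Prop :=
  Hotter P (hotnessLevel P a) (hotnessLevel P b)

/-- A Carnot element of the theory `P` operating between hotness levels `h'` and
`h`: a reversible cyclic element `(0, μ' − μ)` with `μ', μ` nonzero nonnegative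
measures supported in `h'`, `h` respectively. -/
def IsCarnotBetween (P : Set (VSp X)) (h' h : Set X) (p : VSp X) : Prop :=
  p ∈ hatP P ∧ -p ∈ hatP P ∧
    ∃ μ' μ : Meas X, μ' ∈ PosMeas X ∧ μ ∈ PosMeas X ∧ μ' ≠ 0 ∧ μ ≠ 0 ∧
      SuppIn μ' h' ∧ SuppIn μ h ∧ p = ((0 : Meas X), μ' - μ)

end

/-! A Clausius–Duhem pair `(η, T)` amounts to the continuous linear functional
`(Δm, q) ↦ q(1/T) - Δm(η)` being nonpositive on `\hat P`. Testing it on `(0, ±(δ_σ - δ_σ'))`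
shows that `1/T` is constant on hotness levels, and testing it on the element of (i) then gives
`1/T(h') ≤ 1/T(h)`, since `ν(1/T) ≥ 0`. Conversely, if (i) fails then `\hat P` misses the compact
convex set joining the normalised transfers `(0, π' - π)` to the normalised heat absorptions
`(0, ρ)` (the latter by the Kelvin–Planck property), and a Hahn–Banach separation of this set
from the closed convex cone `\hat P` yields a Clausius–Duhem pair with `T(h') < T(h)`. -/

noncomputable section

instance WeakDual.instLocallyConvexSpaceReal {E : Type*} [NormedAddCommGroup E]
    [NormedSpace ℝ E] : LocallyConvexSpace ℝ (WeakDual ℝ E) :=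
  WeakBilin.locallyConvexSpace

theorem isCompact_convexJoin {E : Type*} [AddCommGroup E] [Module ℝ E] [TopologicalSpace E]
    [IsTopologicalAddGroup E] [ContinuousSMul ℝ E] {s t : Set E}
    (hs : IsCompact s) (ht : IsCompact t) : IsCompact (convexJoin ℝ s t) := by
  have hjoin : convexJoin ℝ s t =
      (fun p : ℝ × E × E => (1 - p.1) • p.2.1 + p.1 • p.2.2) '' (Icc 0 1 ×ˢ s ×ˢ t) := by
    ext z
    simp only [mem_convexJoin, segment_eq_image, mem_image, mem_prod, Prod.exists]
    constructor
    · rintro ⟨x, hx, y, hy, θ, hθ, rfl⟩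
      exact ⟨θ, x, y, ⟨hθ, hx, hy⟩, rfl⟩
    · rintro ⟨θ, x, y, ⟨hθ, hx, hy⟩, rfl⟩
      exact ⟨x, hx, y, hy, θ, hθ, rfl⟩
  rw [hjoin]
  exact (isCompact_Icc.prod (hs.prod ht)).image (by fun_prop)

theorem exists_nonpos_on_cone_pos_on_compact {E : Type*} [AddCommGroup E] [Module ℝ E]
    [TopologicalSpace E] [IsTopologicalAddGroup E] [ContinuousSMul ℝ E]
    [LocallyConvexSpace ℝ E] {C K : Set E} (hC : Convex ℝ C) (hCc : IsClosed C)
    (hC0 : (0 : E) ∈ C) (hCsmul : ∀ c : ℝ, 0 ≤ c → ∀ p ∈ C, c • p ∈ C)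
    (hK : Convex ℝ K) (hKc : IsCompact K) (hCK : Disjoint C K) :
    ∃ F : StrongDual ℝ E, (∀ p ∈ C, F p ≤ 0) ∧ ∀ q ∈ K, 0 < F q := by
  obtain ⟨F, u, v, hFC, huv, hFK⟩ := geometric_hahn_banach_closed_compact hC hCc hK hKc hCK
  have hu : 0 < u := by simpa using hFC 0 hC0
  refine ⟨F, fun p hp => ?_, fun q hq => by linarith [hFK q hq]⟩
  by_contra! hpos
  have := hFC _ (hCsmul (u / F p) (div_nonneg hu.le hpos.le) p hp)
  rw [map_smul, smul_eq_mul, div_mul_cancel₀ _ hpos.ne'] at this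
  exact lt_irrefl u this

variable {X : Type*} [TopologicalSpace X]

theorem Meas.continuous_apply (f : C(X, ℝ)) : Continuous fun μ : Meas X => μ f :=
  WeakBilin.eval_continuous _ f

theorem Meas.exists_eq_apply (G : Meas X →L[ℝ] ℝ) : ∃ f : C(X, ℝ), ∀ μ : Meas X, G μ = μ f := by
  obtain ⟨f, hf⟩ := (topDualPairing ℝ C(X, ℝ)).dualEmbedding_surjective G
  exact ⟨f, fun μ => by rw [← hf]; rfl⟩

theorem smul_mem_posMeas {c : ℝ} (hc : 0 ≤ c) {μ : Meas X} (hμ : μ ∈ PosMeas X) :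
    c • μ ∈ PosMeas X :=
  fun f hf => mul_nonneg hc (hμ f hf)

theorem isClosed_posMeas : IsClosed (PosMeas X) := by
  simp only [PosMeas, ofPred_forall]
  exact isClosed_iInter fun f => isClosed_iInter fun _ =>
    isClosed_le continuous_const (Meas.continuous_apply f)

theorem abs_apply_le_of_mem_posMeas [CompactSpace X] {μ : Meas X} (hμ : μ ∈ PosMeas X)
    (f : C(X, ℝ)) : |μ f| ≤ ‖f‖ * μ 1 := by
  have hbound : ∀ x, |f x| ≤ ‖f‖ := fun x => by
    simpa only [Real.norm_eq_abs] using f.norm_coe_le_norm x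
  have hupper := hμ (‖f‖ • 1 - f) fun x => by
    simp only [ContinuousMap.sub_apply, ContinuousMap.smul_apply, ContinuousMap.one_apply,
      smul_eq_mul, mul_one]
    linarith [(abs_le.mp (hbound x)).2]
  have hlower := hμ (‖f‖ • 1 + f) fun x => by
    simp only [ContinuousMap.add_apply, ContinuousMap.smul_apply, ContinuousMap.one_apply,
      smul_eq_mul, mul_one]
    linarith [(abs_le.mp (hbound x)).1]
  rw [map_sub, map_smul, smul_eq_mul] at hupper
  rw [map_add, map_smul, smul_eq_mul] at hlower
  exact abs_le.mpr ⟨by linarith, by linarith⟩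

theorem SuppIn.smul {μ : Meas X} {A : Set X} (hμ : SuppIn μ A) (c : ℝ) : SuppIn (c • μ) A :=
  fun f hf => show c * μ f = 0 by rw [hμ f hf, mul_zero]

theorem SuppIn.apply_eq_mul {μ : Meas X} {A : Set X} (hμ : SuppIn μ A) {f : C(X, ℝ)} {c : ℝ}
    (hf : ∀ x ∈ A, f x = c) : μ f = c * μ 1 := by
  have := hμ (f - c • 1) fun x hx => by simp [hf x hx]
  rw [map_sub, map_smul, smul_eq_mul] at this
  linarith

theorem isClosed_setOf_suppIn (A : Set X) : IsClosed {μ : Meas X | SuppIn μ A} := by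
  simp only [SuppIn, ofPred_forall]
  exact isClosed_iInter fun f => isClosed_iInter fun _ =>
    isClosed_eq (Meas.continuous_apply f) continuous_const

def probIn (A : Set X) : Set (Meas X) :=
  {μ | μ ∈ PosMeas X ∧ μ 1 = 1 ∧ SuppIn μ A}

theorem dirac_mem_probIn {A : Set X} {x : X} (hx : x ∈ A) : dirac x ∈ probIn A :=
  ⟨fun _ hf => hf x, rfl, fun _ hf => hf x hx⟩

theorem convex_probIn (A : Set X) : Convex ℝ (probIn A) := by
  rintro μ ⟨hμ, hμ1, hμA⟩ ν ⟨hν, hν1, hνA⟩ s t hs ht hst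
  refine ⟨fun f hf => ?_, ?_, fun f hf => ?_⟩
  · change 0 ≤ s * μ f + t * ν f
    have := hμ f hf
    have := hν f hf
    positivity
  · change s * μ 1 + t * ν 1 = 1
    rw [hμ1, hν1, mul_one, mul_one, hst]
  · change s * μ f + t * ν f = 0
    rw [hμA f hf, hνA f hf, mul_zero, mul_zero, add_zero]

theorem isCompact_probIn [CompactSpace X] (A : Set X) : IsCompact (probIn A) := by
  refine WeakDual.isCompact_of_bounded_of_closed ?_
    (isClosed_posMeas.inter ((isClosed_eq (Meas.continuous_apply 1) continuous_const).inter
      (isClosed_setOf_suppIn A)))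
  refine (Metric.isBounded_closedBall (x := (0 : StrongDual ℝ C(X, ℝ))) (r := 1)).subset ?_
  rintro μ ⟨hμ, hμ1, -⟩
  rw [Metric.mem_closedBall]
  refine (dist_zero_right μ).trans_le <|
    ContinuousLinearMap.opNorm_le_bound _ zero_le_one fun f => ?_
  have hbound := abs_apply_le_of_mem_posMeas hμ f
  rw [hμ1, mul_one] at hbound
  rw [one_mul, Real.norm_eq_abs]
  exact hbound

variable {P : Set (VSp X)}

theorem subset_hatP (P : Set (VSp X)) : P ⊆ hatP P :=
  fun p hp => subset_closure ⟨1, zero_le_one, p, hp, (one_smul ℝ p).symm⟩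

theorem smul_mem_hatP {c : ℝ} (hc : 0 ≤ c) {p : VSp X} (hp : p ∈ hatP P) : c • p ∈ hatP P := by
  refine closure_mono ?_ (image_closure_subset_closure_image (continuous_const_smul c)
    (mem_image_of_mem _ hp))
  rintro _ ⟨_, ⟨d, hd, q, hq, rfl⟩, rfl⟩
  exact ⟨c * d, mul_nonneg hc hd, q, hq, smul_smul c d q⟩

theorem forall_mem_hatP_of_forall_mem {η β : C(X, ℝ)} (h : ∀ p ∈ P, p.2 β ≤ p.1 η) :
    ∀ p ∈ hatP P, p.2 β ≤ p.1 η := by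
  refine fun p hp => closure_minimal ?_
    (isClosed_le ((Meas.continuous_apply β).comp continuous_snd)
      ((Meas.continuous_apply η).comp continuous_fst)) hp
  rintro _ ⟨c, hc, q, hq, rfl⟩
  exact mul_le_mul_of_nonneg_left (h q hq) hc

theorem IsKelvinPlanck.zero_mem_hatP (hP : IsKelvinPlanck P) : (0 : VSp X) ∈ hatP P :=
  (hP.2.symm.subset rfl).1

theorem mem_hotnessLevel_self (h0 : (0 : VSp X) ∈ hatP P) (a : X) : a ∈ hotnessLevel P a := by
  simp only [hotnessLevel, SameHotness, mem_ofPred_eq, sub_self, and_self]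
  exact h0

theorem apply_eq_of_mem_hotnessLevel {η β : C(X, ℝ)} (h : ∀ p ∈ hatP P, p.2 β ≤ p.1 η)
    {a x : X} (hx : x ∈ hotnessLevel P a) : β x = β a := by
  have hax : β a - β x ≤ 0 := h _ hx.1
  have hxa : β x - β a ≤ 0 := h _ hx.2
  linarith

theorem isCDTemp_iff {T : C(X, ℝ)} :
    IsCDTemp P T ↔ ∃ β η : C(X, ℝ), (∀ x, 0 < β x) ∧ (∀ x, T x = (β x)⁻¹) ∧
      ∀ p ∈ hatP P, p.2 β ≤ p.1 η := by
  constructor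
  · rintro ⟨η, hT, hCD⟩
    refine ⟨⟨fun x => (T x)⁻¹, T.continuous.inv₀ fun x => (hT x).ne'⟩, η,
      fun x => inv_pos.mpr (hT x), fun x => (inv_inv _).symm, ?_⟩
    exact forall_mem_hatP_of_forall_mem (hCD _ fun _ => rfl)
  · rintro ⟨β, η, hβ, hTβ, hCD⟩
    refine ⟨η, fun x => by simpa [hTβ] using hβ x, fun β' hβ' p hp => ?_⟩
    obtain rfl : β' = β := ContinuousMap.ext fun x => by rw [hβ', hTβ, inv_inv]
    exact hCD p (subset_hatP P hp)

def WeaklyHotter (P : Set (VSp X)) (h' h : Set X) : Prop :=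
  ∃ μ' μ ν : Meas X, μ' ∈ PosMeas X ∧ μ ∈ PosMeas X ∧ ν ∈ PosMeas X ∧
    SuppIn μ' h' ∧ SuppIn μ h ∧ μ' 1 = μ 1 ∧ 0 < μ 1 ∧ ((0 : Meas X), μ' - μ + ν) ∈ hatP P

theorem WeaklyHotter.apply_le {a b : X}
    (hw : WeaklyHotter P (hotnessLevel P a) (hotnessLevel P b)) {η β : C(X, ℝ)}
    (hβ : ∀ x, 0 ≤ β x) (hCD : ∀ p ∈ hatP P, p.2 β ≤ p.1 η) : β a ≤ β b := by
  obtain ⟨μ', μ, ν, -, -, hν, hμ'a, hμb, hmass, hpos, hmem⟩ := hw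
  have hμ' := hμ'a.apply_eq_mul fun x hx => apply_eq_of_mem_hotnessLevel hCD hx
  have hμ := hμb.apply_eq_mul fun x hx => apply_eq_of_mem_hotnessLevel hCD hx
  have hcycle : μ' β - μ β + ν β ≤ 0 := hCD _ hmem
  rw [hμ', hμ, hmass] at hcycle
  nlinarith [hν β hβ]

theorem WeaklyHotter.le_of_isCDTemp {a b : X}
    (hw : WeaklyHotter P (hotnessLevel P a) (hotnessLevel P b)) {T : C(X, ℝ)}
    (hT : IsCDTemp P T) {a' b' : X} (ha' : a' ∈ hotnessLevel P a)
    (hb' : b' ∈ hotnessLevel P b) : T b' ≤ T a' := by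
  obtain ⟨β, η, hβ, hTβ, hCD⟩ := isCDTemp_iff.mp hT
  rw [hTβ, hTβ, apply_eq_of_mem_hotnessLevel hCD ha', apply_eq_of_mem_hotnessLevel hCD hb']
  exact inv_anti₀ (hβ a) (hw.apply_le (fun x => (hβ x).le) hCD)

def transferJoin (h' h : Set X) : Set (VSp X) :=
  convexJoin ℝ ((fun π : Meas X × Meas X => ((0 : Meas X), π.1 - π.2)) '' (probIn h' ×ˢ probIn h))
    ((fun ρ : Meas X => ((0 : Meas X), ρ)) '' probIn univ)

theorem convex_transferJoin (h' h : Set X) : Convex ℝ (transferJoin h' h) :=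
  Convex.convexJoin (((convex_probIn h').prod (convex_probIn h)).linear_image
    ((LinearMap.inr ℝ (Meas X) (Meas X)).comp
      (LinearMap.fst ℝ (Meas X) (Meas X) - LinearMap.snd ℝ (Meas X) (Meas X))))
    ((convex_probIn univ).linear_image (LinearMap.inr ℝ (Meas X) (Meas X)))

theorem isCompact_transferJoin [CompactSpace X] (h' h : Set X) :
    IsCompact (transferJoin h' h) :=
  isCompact_convexJoin (((isCompact_probIn h').prod (isCompact_probIn h)).image (by fun_prop))
    ((isCompact_probIn univ).image (by fun_prop))

theorem dirac_sub_mem_transferJoin {h' h : Set X} {a b : X} (ha : a ∈ h') (hb : b ∈ h) :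
    ((0 : Meas X), dirac a - dirac b) ∈ transferJoin h' h := by
  unfold transferJoin
  exact subset_convexJoin_left ((nonempty_of_mem (dirac_mem_probIn (mem_univ a))).image _)
    (mem_image_of_mem _ (mk_mem_prod (dirac_mem_probIn ha) (dirac_mem_probIn hb)))

theorem dirac_mem_transferJoin {h' h : Set X} {a b : X} (ha : a ∈ h') (hb : b ∈ h) (x : X) :
    ((0 : Meas X), dirac x) ∈ transferJoin h' h := by
  unfold transferJoin
  exact subset_convexJoin_right
    ((nonempty_of_mem (mk_mem_prod (dirac_mem_probIn ha) (dirac_mem_probIn hb))).image _)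
    (mem_image_of_mem _ (dirac_mem_probIn (mem_univ x)))

theorem disjoint_hatP_transferJoin (hP : IsKelvinPlanck P) {h' h : Set X}
    (hni : ¬ WeaklyHotter P h' h) : Disjoint (hatP P) (transferJoin h' h) := by
  rw [Set.disjoint_left]
  intro p hp hpK
  obtain ⟨_, ⟨⟨π', π⟩, ⟨hπ', hπ⟩, rfl⟩, _, ⟨ρ, hρ, rfl⟩, s, t, hs, ht, hst, rfl⟩ :=
    mem_convexJoin.mp hpK
  have hsum : s • ((0 : Meas X), π' - π) + t • ((0 : Meas X), ρ) =
      ((0 : Meas X), s • π' - s • π + t • ρ) := by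
    simp only [Prod.smul_mk, Prod.mk_add_mk, smul_zero, add_zero, smul_sub]
  rw [hsum] at hp
  rcases hs.eq_or_lt with rfl | hs
  · obtain rfl : t = 1 := by linarith
    simp only [zero_smul, sub_self, zero_add, one_smul] at hp
    have hρ0 : ((0 : Meas X), ρ) ∈ ({(0, 0)} : Set (VSp X)) := hP.2 ▸ ⟨hp, rfl, hρ.1⟩
    have hρ1 : ρ 1 = 1 := hρ.2.1
    simp only [mem_singleton_iff, Prod.mk.injEq, true_and] at hρ0
    rw [hρ0] at hρ1
    exact zero_ne_one hρ1
  · refine hni ⟨s • π', s • π, t • ρ, smul_mem_posMeas hs.le hπ'.1, smul_mem_posMeas hs.le hπ.1,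
      smul_mem_posMeas ht hρ.1, hπ'.2.2.smul s, hπ.2.2.smul s, ?_, ?_, hp⟩
    · change s * π' 1 = s * π 1
      rw [hπ'.2.1, hπ.2.1]
    · change 0 < s * π 1
      rwa [hπ.2.1, mul_one]

theorem exists_isCDTemp_lt_of_not_weaklyHotter [CompactSpace X] (hP : IsKelvinPlanck P)
    {h' h : Set X} {a b : X} (ha : a ∈ h') (hb : b ∈ h) (hni : ¬ WeaklyHotter P h' h) :
    ∃ T : C(X, ℝ), IsCDTemp P T ∧ T a < T b := by
  obtain ⟨F, hFP, hFK⟩ := exists_nonpos_on_cone_pos_on_compact hP.1.2 isClosed_closure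
    hP.zero_mem_hatP (fun _ hc _ hp => smul_mem_hatP hc hp) (convex_transferJoin h' h)
    (isCompact_transferJoin h' h) (disjoint_hatP_transferJoin hP hni)
  obtain ⟨η, hη⟩ := Meas.exists_eq_apply (F.comp (.inl ℝ (Meas X) (Meas X)))
  obtain ⟨β, hβ⟩ := Meas.exists_eq_apply (F.comp (.inr ℝ (Meas X) (Meas X)))
  have hF (p : VSp X) : F p = p.1 η + p.2 β := by
    rw [← F.comp_inl_add_comp_inr p, hη, hβ]
  have hβpos (x : X) : 0 < β x := by
    have hx := hFK _ (dirac_mem_transferJoin ha hb x)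
    rw [hF] at hx
    exact hx.trans_eq (zero_add (β x))
  have hβab : 0 < β a - β b := by
    have hab := hFK _ (dirac_sub_mem_transferJoin ha hb)
    rw [hF] at hab
    exact hab.trans_eq (zero_add (β a - β b))
  refine ⟨⟨fun x => (β x)⁻¹, β.continuous.inv₀ fun x => (hβpos x).ne'⟩,
    isCDTemp_iff.mpr ⟨β, -η, hβpos, fun _ => rfl, fun p hp => ?_⟩,
    (inv_lt_inv₀ (hβpos a) (hβpos b)).mpr (sub_pos.mp hβab)⟩
  have hp' := hFP p hp
  rw [hF, ← neg_neg (p.1 η), ← map_neg] at hp'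
  linarith

end

theorem weakly_hotter_iff_temperature_ge_general
    {X : Type*} [TopologicalSpace X] [CompactSpace X]
    (P : Set (VSp X)) (hP : IsKelvinPlanck P) (a b : X) :
    (∃ μ' μ ν : Meas X, μ' ∈ PosMeas X ∧ μ ∈ PosMeas X ∧ ν ∈ PosMeas X ∧
        SuppIn μ' (hotnessLevel P a) ∧ SuppIn μ (hotnessLevel P b) ∧
        μ' (1 : C(X, ℝ)) = μ (1 : C(X, ℝ)) ∧ 0 < μ (1 : C(X, ℝ)) ∧
        ((0 : Meas X), μ' - μ + ν) ∈ hatP P) ↔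
      ∀ T : C(X, ℝ), IsCDTemp P T →
        ∀ a' ∈ hotnessLevel P a, ∀ b' ∈ hotnessLevel P b, T b' ≤ T a' := by
  refine ⟨fun hw T hT a' ha' b' hb' => WeaklyHotter.le_of_isCDTemp hw hT ha' hb', fun hT => ?_⟩
  by_contra hni
  have ha := mem_hotnessLevel_self hP.zero_mem_hatP a
  have hb := mem_hotnessLevel_self hP.zero_mem_hatP b
  obtain ⟨T, hTcd, hlt⟩ := exists_isCDTemp_lt_of_not_weaklyHotter hP ha hb hni
  exact (hT T hTcd a ha b hb).not_gt hlt

/-- **Theorem.** Let `(X, P)` be a Kelvin–Planck theory and let `h' = [a]`, `h = [b]`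
be distinct hotness levels.  The following are equivalent:
(i) `h'` is weakly hotter than `h`, i.e. `\hat P` contains `(0, μ' − μ + ν)` with
`μ', μ, ν` nonnegative, `supp μ' ⊆ h'`, `supp μ ⊆ h`, `μ'(h') = μ(h) > 0`;
(ii) `T σ' ≥ T σ` for every Clausius–Duhem temperature scale `T` and all
`σ' ∈ h'`, `σ ∈ h`. -/
theorem weakly_hotter_iff_temperature_ge
    {X : Type*} [TopologicalSpace X] [CompactSpace X] [T2Space X]
    (P : Set (VSp X)) (hP : IsKelvinPlanck P) (a b : X)
    (hne : hotnessLevel P a ≠ hotnessLevel P b) :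
    (∃ μ' μ ν : Meas X, μ' ∈ PosMeas X ∧ μ ∈ PosMeas X ∧ ν ∈ PosMeas X ∧
        SuppIn μ' (hotnessLevel P a) ∧ SuppIn μ (hotnessLevel P b) ∧
        μ' (1 : C(X, ℝ)) = μ (1 : C(X, ℝ)) ∧ 0 < μ (1 : C(X, ℝ)) ∧
        ((0 : Meas X), μ' - μ + ν) ∈ hatP P) ↔
      ∀ T : C(X, ℝ), IsCDTemp P T →
        ∀ a' ∈ hotnessLevel P a, ∀ b' ∈ hotnessLevel P b, T b' ≤ T a' :=
  weakly_hotter_iff_temperature_ge_general P hP a b
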